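/- arXiv:1709.01354 — 2 statements merged into one kernel-verified Lean document; each statement's English description precedes it below -/
import Mathlib

section
/- (Symmetry lemma.) Let G be a finite graph and τ : G → G a graph automorphism such that τ² is the identity and for every vertex v of G, the vertices v and τ(v) are not joined by an edge of G. Let G^τ be the subgraph of G consisting of the vertices and edges fixed by τ. Then ν(G) = ν(G^τ). -/
noncomputable section
open scoped Classical

/-- A finite multigraph with vertices and edge labels drawn from `ℕ`;
loops and multiple edges are allowed.  `ends e` is the unordered pair of
endpoints of the edge labelled `e`. -/
structure MGraph where
  verts : Finset ℕ
  edges : Finset ℕ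
  ends : ℕ → Sym2 ℕ

namespace MGraph

/-- Well-formedness: every edge joins vertices of the graph. -/
def WF (G : MGraph) : Prop := ∀ e ∈ G.edges, ∀ v ∈ G.ends e, v ∈ G.verts

/-- Delete the edge labelled `e`. -/
def delEdge (G : MGraph) (e : ℕ) : MGraph := ⟨G.verts, G.edges.erase e, G.ends⟩

/-- Delete the vertex `v` together with all incident edges. -/
def delVert (G : MGraph) (v : ℕ) : MGraph :=
  ⟨G.verts.erase v, G.edges.filter (fun e => ¬ v ∈ G.ends e), G.ends⟩

def size (G : MGraph) : ℕ := G.verts.card + G.edges.card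

/-- Minimal excludant of a finite set of naturals. -/
def mex (s : Finset ℕ) : ℕ := sInf {n : ℕ | n ∉ s}

/-- Grundy-value computation with fuel; every move strictly decreases `size`,
so fuel `size G` computes the true Sprague–Grundy value of `G`. -/
def nimAux : ℕ → MGraph → ℕ
  | 0, _ => 0
  | fuel + 1, G =>
      mex ((G.verts.image fun v => nimAux fuel (G.delVert v)) ∪
           (G.edges.image fun e => nimAux fuel (G.delEdge e)))

/-- The nim-value (Sprague–Grundy value) of the vertex-and-edge deletion game on
`G` : `ν(∅) = 0` and `ν(G) = mex {ν(H) : H is obtained from G by a single move}`,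
where a move deletes one edge, or one vertex with all incident edges. -/
def nim (G : MGraph) : ℕ := nimAux G.size G

/-- The parity function `φ(G) = (|V| mod 2) + 2 (|E| mod 2)`. -/
def phi (G : MGraph) : ℕ := G.verts.card % 2 + 2 * (G.edges.card % 2)

/-- `u` and `v` are joined by an edge. -/
def Adj (G : MGraph) (u v : ℕ) : Prop := ∃ e ∈ G.edges, G.ends e = s(u, v)

def Reach (G : MGraph) (u v : ℕ) : Prop := Relation.ReflTransGen G.Adj u v

def Connected (G : MGraph) : Prop :=
  G.verts.Nonempty ∧ ∀ u ∈ G.verts, ∀ v ∈ G.verts, G.Reach u v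

/-- A (finite) tree: a connected well-formed graph with `|E| + 1 = |V|`
(this forces the absence of loops, multiple edges and cycles). -/
def IsTree (G : MGraph) : Prop := G.WF ∧ G.Connected ∧ G.edges.card + 1 = G.verts.card

/-- `G` is a cycle graph of length `n ≥ 2`. -/
def IsCycle (G : MGraph) (n : ℕ) : Prop :=
  2 ≤ n ∧ ∃ f g : ℕ → ℕ,
    Set.InjOn f (Set.Iio n) ∧ Set.InjOn g (Set.Iio n) ∧
    G.verts = (Finset.range n).image f ∧
    G.edges = (Finset.range n).image g ∧
    ∀ i < n, G.ends (g i) = s(f i, f ((i + 1) % n))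

/-- `G` is a cycle of odd length (hence of length at least 3). -/
def IsOddCycle (G : MGraph) : Prop := ∃ n, Odd n ∧ G.IsCycle n

/-- Induced subgraph on a set of vertices. -/
def induce (G : MGraph) (S : Finset ℕ) : MGraph :=
  ⟨S, G.edges.filter (fun e => ∀ v ∈ G.ends e, v ∈ S), G.ends⟩

/-- The connected component of `v` in `G`. -/
def component (G : MGraph) (v : ℕ) : MGraph :=
  G.induce (G.verts.filter fun u => G.Reach v u)

/-- Two `MGraph`s are the same graph (same vertices, edges and incidence). -/
def SameGraph (G H : MGraph) : Prop :=
  G.verts = H.verts ∧ G.edges = H.edges ∧ ∀ e ∈ G.edges, G.ends e = H.ends e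

/-- An isomorphism of multigraphs. -/
structure Iso (G H : MGraph) where
  vmap : ℕ → ℕ
  emap : ℕ → ℕ
  vmap_bij : Set.BijOn vmap (G.verts : Set ℕ) (H.verts : Set ℕ)
  emap_bij : Set.BijOn emap (G.edges : Set ℕ) (H.edges : Set ℕ)
  ends_eq : ∀ e ∈ G.edges, H.ends (emap e) = (G.ends e).map vmap

/-- The data witnessing a cancellation at the vertex `s` : `G` is the disjoint
union of a graph `G'` containing `s` and two isomorphic graphs, with vertex
sets `B` and `C`, together with two edges `e₁`, `e₂` joining `s` to
corresponding vertices `v₁ ∈ B`, `v₂ ∈ C`. -/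
def Cancellation (G : MGraph) (s : ℕ) (B C : Finset ℕ) : Prop :=
  ∃ e₁ e₂ v₁ v₂ : ℕ,
    s ∈ G.verts ∧ s ∉ B ∧ s ∉ C ∧ Disjoint B C ∧
    B ⊆ G.verts ∧ C ⊆ G.verts ∧ v₁ ∈ B ∧ v₂ ∈ C ∧
    e₁ ∈ G.edges ∧ e₂ ∈ G.edges ∧ e₁ ≠ e₂ ∧
    G.ends e₁ = s(s, v₁) ∧ G.ends e₂ = s(s, v₂) ∧
    (∀ e ∈ G.edges, e = e₁ ∨ e = e₂ ∨ (∀ v ∈ G.ends e, v ∈ B) ∨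
      (∀ v ∈ G.ends e, v ∈ C) ∨ (∀ v ∈ G.ends e, v ∈ G.verts \ (B ∪ C))) ∧
    ∃ φ : Iso (G.induce B) (G.induce C), φ.vmap v₁ = v₂

def HasCancellationAt (G : MGraph) (s : ℕ) : Prop := ∃ B C, G.Cancellation s B C

/-- A graph is reduced if no cancellation is possible. -/
def Reduced (G : MGraph) : Prop := ∀ s, ¬ G.HasCancellationAt s

/-- Performing one cancellation. -/
def CancelStep (G G' : MGraph) : Prop :=
  ∃ s B C, G.Cancellation s B C ∧ G' = G.induce (G.verts \ (B ∪ C))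

/-- `G` reduces to `H` by a (possibly empty) sequence of cancellations. -/
def ReducesTo (G H : MGraph) : Prop := Relation.ReflTransGen CancelStep G H

/-- `G` consists of the odd cycle `C` attached to the tree `T` at the single
vertex `A`. -/
def CycleWithTreeAt (G C T : MGraph) (A : ℕ) : Prop :=
  C.IsOddCycle ∧ T.IsTree ∧
  C.verts ∩ T.verts = {A} ∧
  Disjoint C.edges T.edges ∧
  G.verts = C.verts ∪ T.verts ∧
  G.edges = C.edges ∪ T.edges ∧
  (∀ e ∈ C.edges, G.ends e = C.ends e) ∧
  (∀ e ∈ T.edges, G.ends e = T.ends e)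

/-- For a graph `G` containing the odd cycle `C` attached to the rest of the
graph at the vertex `A` : the vertex `v` (outside the cycle) is telescoping if,
after deleting `v`, the connected component of `A` reduces by repeatedly
performing cancellations to exactly the cycle `C`. -/
def Telescoping (G C : MGraph) (A v : ℕ) : Prop :=
  v ∈ G.verts ∧ v ∉ C.verts ∧
  ∃ H, ReducesTo ((G.delVert v).component A) H ∧ H.SameGraph C

/-- The degree of the vertex `v`; a loop contributes `2`. -/
def degree (G : MGraph) (v : ℕ) : ℕ :=
  ∑ e ∈ G.edges,
    (if G.ends e = s(v, v) then 2 else if v ∈ G.ends e then 1 else 0)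

def NoLoops (G : MGraph) : Prop := ∀ e ∈ G.edges, ¬ (G.ends e).IsDiag

def IsSubgraph (H G : MGraph) : Prop :=
  H.verts ⊆ G.verts ∧ H.edges ⊆ G.edges ∧ ∀ e ∈ H.edges, H.ends e = G.ends e

/-- `G` contains the odd cycle `C` and no other cycles (of length ≥ 2). -/
def UniqueOddCycle (G C : MGraph) : Prop :=
  C.IsSubgraph G ∧ C.IsOddCycle ∧
  ∀ (C' : MGraph) (n : ℕ), C'.IsSubgraph G → C'.IsCycle n → C'.SameGraph C

/-- `G` is bipartite (two-colourable); in particular it has no loops. -/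
def Bipartite (G : MGraph) : Prop :=
  ∃ c : ℕ → Bool, ∀ e ∈ G.edges, ∀ u v : ℕ, G.ends e = s(u, v) → c u ≠ c v

/-- `G` is a path of length `z` (i.e. with `z` edges) from `P` to `Q`. -/
def IsPath (G : MGraph) (P Q z : ℕ) : Prop :=
  ∃ f g : ℕ → ℕ,
    Set.InjOn f (Set.Iio (z + 1)) ∧ Set.InjOn g (Set.Iio z) ∧
    f 0 = P ∧ f z = Q ∧
    G.verts = (Finset.range (z + 1)).image f ∧
    G.edges = (Finset.range z).image g ∧
    ∀ i < z, G.ends (g i) = s(f i, f (i + 1))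

/-- There is a walk of length `n` from `u` to `v` in `G`. -/
def WalkLen (G : MGraph) (u v n : ℕ) : Prop :=
  ∃ f : ℕ → ℕ, f 0 = u ∧ f n = v ∧ ∀ i < n, G.Adj (f i) (f (i + 1))

/-- Graph distance between two vertices. -/
def edist (G : MGraph) (u v : ℕ) : ℕ := sInf {n | G.WalkLen u v n}

end MGraph

namespace MGraph

/-- The subgraph `G^τ` of `G` on which the automorphism `τ` acts as the
identity: the fixed vertices together with the fixed edges. -/
def fixedSubgraph (G : MGraph) (τ : Iso G G) : MGraph :=
  ⟨G.verts.filter (fun v => τ.vmap v = v), G.edges.filter (fun e => τ.emap e = e), G.ends⟩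

/-! By induction on the size of `G` it suffices that no move of `G` reaches value `ν(G^τ)`
while every smaller value is reached. A move of `G^τ` deletes a `τ`-fixed vertex or edge `x`;
the same move in `G` leaves a `τ`-symmetric graph with fixed part `G^τ - x`, of the same value by
induction. A move of `G` on a non-fixed `x` is answered by the mirror move on `τ x`, which
restores a symmetric graph with fixed part `G^τ`, so the first move cannot have value `ν(G^τ)`.
Deleting `v` and `τ v` removes no fixed edge, since such an edge would join `v` to `τ v`.
-/

lemma mex_notMem (s : Finset ℕ) : mex s ∉ s :=
  Nat.sInf_mem (Infinite.exists_notMem_finset s)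

lemma mem_of_lt_mex {s : Finset ℕ} {k : ℕ} (h : k < mex s) : k ∈ s := by
  by_contra hk
  exact h.not_ge (Nat.sInf_le hk)

lemma mex_eq {s : Finset ℕ} {m : ℕ} (hm : m ∉ s) (hlt : ∀ k < m, k ∈ s) : mex s = m :=
  le_antisymm (Nat.sInf_le hm) (le_of_not_gt fun h => mex_notMem s (hlt _ h))

lemma size_delVert_lt {G : MGraph} {v : ℕ} (hv : v ∈ G.verts) :
    (G.delVert v).size < G.size :=
  Nat.add_lt_add_of_lt_of_le (Finset.card_erase_lt_of_mem hv) (Finset.card_filter_le _ _)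

lemma size_delEdge_lt {G : MGraph} {e : ℕ} (he : e ∈ G.edges) :
    (G.delEdge e).size < G.size :=
  Nat.add_lt_add_left (Finset.card_erase_lt_of_mem he) _

lemma nimAux_succ : ∀ (n : ℕ) (G : MGraph), G.size ≤ n → nimAux (n + 1) G = nimAux n G
  | 0, G, h => by
    have hG : G.verts = ∅ ∧ G.edges = ∅ := by simpa [size] using h
    simp only [nimAux, hG, Finset.image_empty, Finset.union_empty]
    exact mex_eq (Finset.notMem_empty 0) fun k hk => absurd hk k.not_lt_zero
  | n + 1, G, h => by
    rw [nimAux, nimAux]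
    congr 2
    · refine Finset.image_congr fun v hv => nimAux_succ n _ ?_
      have := size_delVert_lt (Finset.mem_coe.mp hv)
      omega
    · refine Finset.image_congr fun e he => nimAux_succ n _ ?_
      have := size_delEdge_lt (Finset.mem_coe.mp he)
      omega

lemma nimAux_eq_nim {G : MGraph} {n : ℕ} (h : G.size ≤ n) : nimAux n G = G.nim := by
  induction n, h using Nat.le_induction with
  | base => rfl
  | succ n hn ih => rw [nimAux_succ n G hn, ih]

def options (G : MGraph) : Finset ℕ :=
  (G.verts.image fun v => (G.delVert v).nim) ∪ (G.edges.image fun e => (G.delEdge e).nim)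

lemma nim_eq_mex_options (G : MGraph) : G.nim = mex G.options := by
  rw [← nimAux_eq_nim (Nat.le_succ G.size), nimAux, options]
  congr 2
  · exact Finset.image_congr fun v hv =>
      nimAux_eq_nim (size_delVert_lt (Finset.mem_coe.mp hv)).le
  · exact Finset.image_congr fun e he =>
      nimAux_eq_nim (size_delEdge_lt (Finset.mem_coe.mp he)).le

def IsOption (G H : MGraph) : Prop :=
  (∃ v ∈ G.verts, G.delVert v = H) ∨ ∃ e ∈ G.edges, G.delEdge e = H

lemma mem_options {G : MGraph} {k : ℕ} :
    k ∈ G.options ↔ ∃ H, G.IsOption H ∧ H.nim = k := by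
  simp only [options, IsOption, Finset.mem_union, Finset.mem_image]
  aesop

lemma IsOption.size_lt {G H : MGraph} (h : G.IsOption H) : H.size < G.size := by
  rcases h with ⟨v, hv, rfl⟩ | ⟨e, he, rfl⟩
  exacts [size_delVert_lt hv, size_delEdge_lt he]

lemma IsOption.nim_ne {G H : MGraph} (h : G.IsOption H) : H.nim ≠ G.nim := by
  rw [nim_eq_mex_options G]
  intro hH
  exact mex_notMem _ (mem_options.mpr ⟨H, h, hH⟩)

lemma exists_isOption_nim_eq {G : MGraph} {k : ℕ} (hk : k < G.nim) :
    ∃ H, G.IsOption H ∧ H.nim = k := by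
  rw [nim_eq_mex_options] at hk
  exact mem_options.mp (mem_of_lt_mex hk)

lemma nim_eq_of_isOption {G : MGraph} {m : ℕ} (hne : ∀ H, G.IsOption H → H.nim ≠ m)
    (hlt : ∀ k < m, ∃ H, G.IsOption H ∧ H.nim = k) : G.nim = m := by
  rw [nim_eq_mex_options]
  refine mex_eq (fun hm => ?_) fun k hk => mem_options.mpr (hlt k hk)
  obtain ⟨H, hH, rfl⟩ := mem_options.mp hm
  exact hne H hH rfl

/-- The hypotheses on `τ`, unbundled from `Iso` into a vertex map `σ` and an edge map `ε`:
unlike `Iso G G`, they pass unchanged to subgraphs that `σ` and `ε` leave invariant. -/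
structure IsSymmetry (G : MGraph) (σ ε : ℕ → ℕ) : Prop where
  vmap_mem : ∀ v ∈ G.verts, σ v ∈ G.verts
  emap_mem : ∀ e ∈ G.edges, ε e ∈ G.edges
  ends_emap : ∀ e ∈ G.edges, G.ends (ε e) = (G.ends e).map σ
  vmap_vmap : ∀ v ∈ G.verts, σ (σ v) = v
  emap_emap : ∀ e ∈ G.edges, ε (ε e) = e
  not_adj_vmap : ∀ v ∈ G.verts, ¬ G.Adj v (σ v)

def fixedPart (G : MGraph) (σ ε : ℕ → ℕ) : MGraph :=
  ⟨G.verts.filter (fun v => σ v = v), G.edges.filter (fun e => ε e = e), G.ends⟩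

section

variable {G H K : MGraph} {σ ε : ℕ → ℕ} {u v e : ℕ}

@[simp] lemma mem_delVert_verts : u ∈ (G.delVert v).verts ↔ u ≠ v ∧ u ∈ G.verts :=
  Finset.mem_erase

@[simp] lemma mem_delVert_edges : e ∈ (G.delVert v).edges ↔ e ∈ G.edges ∧ v ∉ G.ends e :=
  Finset.mem_filter

@[simp] lemma ends_delVert : (G.delVert v).ends = G.ends := rfl

@[simp] lemma mem_delEdge_edges {e' : ℕ} :
    e' ∈ (G.delEdge e).edges ↔ e' ≠ e ∧ e' ∈ G.edges :=
  Finset.mem_erase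

lemma fixedPart_delVert : (G.delVert v).fixedPart σ ε = (G.fixedPart σ ε).delVert v := by
  simp only [fixedPart, delVert, mk.injEq, Finset.filter_erase, true_and, and_true]
  exact Finset.filter_comm ..

lemma fixedPart_delEdge : (G.delEdge e).fixedPart σ ε = (G.fixedPart σ ε).delEdge e := by
  simp only [fixedPart, delEdge, Finset.filter_erase]

lemma delVert_eq_self (hv : v ∉ G.verts) (he : ∀ e ∈ G.edges, v ∉ G.ends e) :
    G.delVert v = G := by
  cases G
  simp only [delVert, Finset.erase_eq_of_notMem hv, Finset.filter_true_of_mem he]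

lemma delEdge_eq_self (he : e ∉ G.edges) : G.delEdge e = G := by
  cases G
  simp only [delEdge, Finset.erase_eq_of_notMem he]

lemma delVert_delVert_self : (G.delVert v).delVert v = G.delVert v :=
  delVert_eq_self (Finset.notMem_erase v _) fun _ he => (Finset.mem_filter.mp he).2

lemma delEdge_delEdge_self : (G.delEdge e).delEdge e = G.delEdge e :=
  delEdge_eq_self (Finset.notMem_erase e _)

lemma isSubgraph_delVert : (G.delVert v).IsSubgraph G :=
  ⟨Finset.erase_subset _ _, Finset.filter_subset _ _, fun _ _ => rfl⟩

lemma isSubgraph_delEdge : (G.delEdge e).IsSubgraph G :=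
  ⟨subset_rfl, Finset.erase_subset _ _, fun _ _ => rfl⟩

lemma IsSubgraph.trans (hKH : K.IsSubgraph H) (hHG : H.IsSubgraph G) : K.IsSubgraph G :=
  ⟨hKH.1.trans hHG.1, hKH.2.1.trans hHG.2.1,
    fun e he => (hKH.2.2 e he).trans (hHG.2.2 e (hKH.2.1 he))⟩

namespace IsSymmetry

lemma vmap_eq_iff (hs : G.IsSymmetry σ ε) (hu : u ∈ G.verts) (hv : v ∈ G.verts) :
    σ u = v ↔ u = σ v :=
  ⟨fun h => h ▸ (hs.vmap_vmap u hu).symm, fun h => h ▸ hs.vmap_vmap v hv⟩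

lemma emap_eq_iff (hs : G.IsSymmetry σ ε) {e' : ℕ} (he : e ∈ G.edges) (he' : e' ∈ G.edges) :
    ε e = e' ↔ e = ε e' :=
  ⟨fun h => h ▸ (hs.emap_emap e he).symm, fun h => h ▸ hs.emap_emap e' he'⟩

lemma mem_ends_emap_iff (hs : G.IsSymmetry σ ε) (he : e ∈ G.edges) (hu : u ∈ G.verts) :
    u ∈ G.ends (ε e) ↔ σ u ∈ G.ends e := by
  constructor
  · intro h
    have h' : σ u ∈ (G.ends (ε e)).map σ := Sym2.mem_map.mpr ⟨u, h, rfl⟩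
    rwa [← hs.ends_emap _ (hs.emap_mem e he), hs.emap_emap e he] at h'
  · intro h
    rw [hs.ends_emap e he]
    exact Sym2.mem_map.mpr ⟨σ u, h, hs.vmap_vmap u hu⟩

lemma notMem_ends_of_emap_eq (hs : G.IsSymmetry σ ε) (hv : v ∈ G.verts) (hσv : σ v ≠ v)
    (he : e ∈ G.edges) (hεe : ε e = e) : v ∉ G.ends e := by
  intro hve
  have hσve : σ v ∈ G.ends e := by
    rwa [← hεe, hs.mem_ends_emap_iff he (hs.vmap_mem v hv), hs.vmap_vmap v hv]
  exact hs.not_adj_vmap v hv ⟨e, he, (Sym2.mem_and_mem_iff hσv.symm).mp ⟨hve, hσve⟩⟩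

lemma of_isSubgraph (hs : G.IsSymmetry σ ε) (hHG : H.IsSubgraph G)
    (hV : ∀ v ∈ H.verts, σ v ∈ H.verts) (hE : ∀ e ∈ H.edges, ε e ∈ H.edges) :
    H.IsSymmetry σ ε where
  vmap_mem := hV
  emap_mem := hE
  ends_emap e he := by
    rw [hHG.2.2 _ (hE e he), hHG.2.2 e he, hs.ends_emap e (hHG.2.1 he)]
  vmap_vmap v hv := hs.vmap_vmap v (hHG.1 hv)
  emap_emap e he := hs.emap_emap e (hHG.2.1 he)
  not_adj_vmap v hv := fun ⟨e, he, hends⟩ =>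
    hs.not_adj_vmap v (hHG.1 hv) ⟨e, hHG.2.1 he, (hHG.2.2 e he).symm.trans hends⟩

lemma delVert_delVert_vmap (hs : G.IsSymmetry σ ε) (hv : v ∈ G.verts) :
    ((G.delVert v).delVert (σ v)).IsSymmetry σ ε := by
  have hσv := hs.vmap_mem v hv
  refine hs.of_isSubgraph (isSubgraph_delVert.trans isSubgraph_delVert) ?_ ?_
  · simp only [mem_delVert_verts]
    rintro u ⟨hu₁, hu₂, hu⟩
    refine ⟨?_, ?_, hs.vmap_mem u hu⟩
    · rwa [Ne, hs.vmap_eq_iff hu hσv, hs.vmap_vmap v hv]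
    · rwa [Ne, hs.vmap_eq_iff hu hv]
  · simp only [mem_delVert_edges, ends_delVert]
    rintro e ⟨⟨he, hve⟩, hσve⟩
    refine ⟨⟨hs.emap_mem e he, ?_⟩, ?_⟩
    · rwa [hs.mem_ends_emap_iff he hv]
    · rwa [hs.mem_ends_emap_iff he hσv, hs.vmap_vmap v hv]

lemma delEdge_delEdge_emap (hs : G.IsSymmetry σ ε) (he : e ∈ G.edges) :
    ((G.delEdge e).delEdge (ε e)).IsSymmetry σ ε := by
  have hεe := hs.emap_mem e he
  refine hs.of_isSubgraph (isSubgraph_delEdge.trans isSubgraph_delEdge) hs.vmap_mem ?_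
  simp only [mem_delEdge_edges]
  rintro e' ⟨he'₁, he'₂, he'⟩
  refine ⟨?_, ?_, hs.emap_mem e' he'⟩
  · rwa [Ne, hs.emap_eq_iff he' hεe, hs.emap_emap e he]
  · rwa [Ne, hs.emap_eq_iff he' he]

lemma delVert_of_vmap_eq (hs : G.IsSymmetry σ ε) (hv : v ∈ G.verts) (hσv : σ v = v) :
    (G.delVert v).IsSymmetry σ ε := by
  simpa only [hσv, delVert_delVert_self] using hs.delVert_delVert_vmap hv

lemma delEdge_of_emap_eq (hs : G.IsSymmetry σ ε) (he : e ∈ G.edges) (hεe : ε e = e) :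
    (G.delEdge e).IsSymmetry σ ε := by
  simpa only [hεe, delEdge_delEdge_self] using hs.delEdge_delEdge_emap he

lemma fixedPart_delVert_delVert_vmap (hs : G.IsSymmetry σ ε) (hv : v ∈ G.verts)
    (hσv : σ v ≠ v) :
    ((G.delVert v).delVert (σ v)).fixedPart σ ε = G.fixedPart σ ε := by
  have hσv' : σ (σ v) ≠ σ v := by rwa [hs.vmap_vmap v hv, ne_comm]
  rw [fixedPart_delVert, fixedPart_delVert, delVert_eq_self (v := v), delVert_eq_self]
  · simp only [fixedPart, Finset.mem_filter, not_and]
    exact fun _ => hσv'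
  · simp only [fixedPart, Finset.mem_filter, and_imp]
    exact fun e he hεe => hs.notMem_ends_of_emap_eq (hs.vmap_mem v hv) hσv' he hεe
  · simp only [fixedPart, Finset.mem_filter, not_and]
    exact fun _ => hσv
  · simp only [fixedPart, Finset.mem_filter, and_imp]
    exact fun e he hεe => hs.notMem_ends_of_emap_eq hv hσv he hεe

lemma fixedPart_delEdge_delEdge_emap (hs : G.IsSymmetry σ ε) (he : e ∈ G.edges)
    (hεe : ε e ≠ e) :
    ((G.delEdge e).delEdge (ε e)).fixedPart σ ε = G.fixedPart σ ε := by
  rw [fixedPart_delEdge, fixedPart_delEdge, delEdge_eq_self (e := e), delEdge_eq_self]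
  · simp only [fixedPart, Finset.mem_filter, not_and]
    exact fun _ => by rw [hs.emap_emap e he]; exact hεe.symm
  · simp only [fixedPart, Finset.mem_filter, not_and]
    exact fun _ => hεe

lemma isOption_cases (hs : G.IsSymmetry σ ε) (hH : G.IsOption H) :
    (H.IsSymmetry σ ε ∧ (G.fixedPart σ ε).IsOption (H.fixedPart σ ε)) ∨
      ∃ H', H.IsOption H' ∧ H'.IsSymmetry σ ε ∧ H'.fixedPart σ ε = G.fixedPart σ ε := by
  rcases hH with ⟨v, hv, rfl⟩ | ⟨e, he, rfl⟩
  · by_cases hσv : σ v = v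
    · refine .inl ⟨hs.delVert_of_vmap_eq hv hσv, .inl ⟨v, ?_, fixedPart_delVert.symm⟩⟩
      exact Finset.mem_filter.mpr ⟨hv, hσv⟩
    · refine .inr ⟨_, .inl ⟨σ v, ?_, rfl⟩, hs.delVert_delVert_vmap hv,
        hs.fixedPart_delVert_delVert_vmap hv hσv⟩
      exact mem_delVert_verts.mpr ⟨hσv, hs.vmap_mem v hv⟩
  · by_cases hεe : ε e = e
    · refine .inl ⟨hs.delEdge_of_emap_eq he hεe, .inr ⟨e, ?_, fixedPart_delEdge.symm⟩⟩
      exact Finset.mem_filter.mpr ⟨he, hεe⟩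
    · refine .inr ⟨_, .inr ⟨ε e, ?_, rfl⟩, hs.delEdge_delEdge_emap he,
        hs.fixedPart_delEdge_delEdge_emap he hεe⟩
      exact mem_delEdge_edges.mpr ⟨hεe, hs.emap_mem e he⟩

lemma exists_isOption_of_fixedPart (hs : G.IsSymmetry σ ε)
    (hH : (G.fixedPart σ ε).IsOption H) :
    ∃ H', G.IsOption H' ∧ H'.IsSymmetry σ ε ∧ H'.fixedPart σ ε = H := by
  rcases hH with ⟨v, hv, rfl⟩ | ⟨e, he, rfl⟩
  · obtain ⟨hv, hσv⟩ := Finset.mem_filter.mp hv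
    exact ⟨_, .inl ⟨v, hv, rfl⟩, hs.delVert_of_vmap_eq hv hσv, fixedPart_delVert⟩
  · obtain ⟨he, hεe⟩ := Finset.mem_filter.mp he
    exact ⟨_, .inr ⟨e, he, rfl⟩, hs.delEdge_of_emap_eq he hεe, fixedPart_delEdge⟩

theorem nim_eq_nim_fixedPart {G : MGraph} (hs : G.IsSymmetry σ ε) :
    G.nim = (G.fixedPart σ ε).nim := by
  refine nim_eq_of_isOption (fun H hH => ?_) fun k hk => ?_
  · rcases hs.isOption_cases hH with ⟨hsH, hF⟩ | ⟨H', hH', hsH', hfix⟩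
    · have := hH.size_lt
      rw [hsH.nim_eq_nim_fixedPart]
      exact hF.nim_ne
    · have := hH'.size_lt.trans hH.size_lt
      rw [← hfix, ← hsH'.nim_eq_nim_fixedPart]
      exact hH'.nim_ne.symm
  · obtain ⟨H, hH, rfl⟩ := exists_isOption_nim_eq hk
    obtain ⟨H', hH', hsH', rfl⟩ := hs.exists_isOption_of_fixedPart hH
    have := hH'.size_lt
    exact ⟨H', hH', hsH'.nim_eq_nim_fixedPart⟩
termination_by G.size

end IsSymmetry

end

theorem nim_eq_nim_fixedSubgraph_general (G : MGraph) (τ : Iso G G)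
    (hv : ∀ v ∈ G.verts, τ.vmap (τ.vmap v) = v)
    (he : ∀ e ∈ G.edges, τ.emap (τ.emap e) = e)
    (hAdj : ∀ v ∈ G.verts, ¬ G.Adj v (τ.vmap v)) :
    G.nim = (G.fixedSubgraph τ).nim :=
  IsSymmetry.nim_eq_nim_fixedPart
    { vmap_mem := fun _ hv => τ.vmap_bij.mapsTo hv
      emap_mem := fun _ he => τ.emap_bij.mapsTo he
      ends_emap := τ.ends_eq
      vmap_vmap := hv
      emap_emap := he
      not_adj_vmap := hAdj }

/-- The symmetry lemma: if `τ` is an involutive automorphism of the finite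
graph `G` such that no vertex `v` is joined by an edge to `τ(v)`, then
`ν(G) = ν(G^τ)`. -/
theorem nim_eq_nim_fixedSubgraph (G : MGraph) (hWF : G.WF) (τ : Iso G G)
    (hv : ∀ v ∈ G.verts, τ.vmap (τ.vmap v) = v)
    (he : ∀ e ∈ G.edges, τ.emap (τ.emap e) = e)
    (hAdj : ∀ v ∈ G.verts, ¬ G.Adj v (τ.vmap v)) :
    G.nim = (G.fixedSubgraph τ).nim :=
  nim_eq_nim_fixedSubgraph_general G τ hv he hAdj

end MGraph
end
end

section
/- Let T and Y be trees with T ∩ Y = {b} and set D₁ := T ∪ Y; let U and Z be trees with U ∩ Z = {d} and set D₂ := U ∪ Z. Let a be a vertex of T and c a vertex of U. Suppose ψ : D₁ → D₂ is an isomorphism of trees with ψ(a) = c, and suppose θ : T → U is an isomorphism of trees with θ(a) = c and θ(b) = d. Then Y and Z are isomorphic as rooted trees, via an isomorphism sending b to d. -/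
noncomputable section
open scoped Classical

namespace MGraph

/-- `D` is the union of the trees `X` and `Y`, which share exactly the single
vertex `b`. -/
def GluedAt (D X Y : MGraph) (b : ℕ) : Prop :=
  X.IsTree ∧ Y.IsTree ∧ X.verts ∩ Y.verts = {b} ∧
  Disjoint X.edges Y.edges ∧
  D.verts = X.verts ∪ Y.verts ∧ D.edges = X.edges ∪ Y.edges ∧
  (∀ e ∈ X.edges, D.ends e = X.ends e) ∧ (∀ e ∈ Y.edges, D.ends e = Y.ends e)

end MGraph


/-!
Let `σ = ψ ∘ θ⁻¹`, an injection of `U` into `D₂ = U ∪ Z`. Follow the orbit of `ψ y` (`y ∈ Y`)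
under `σ` until it leaves `U` (for vertices: `U \ {d}`). Since `D₂` is the disjoint union both
of `U` and `Z` and of `σ(U)` and `ψ(Y)` (away from the gluing vertices), orbits cannot merge and
must leave `U`, so this first-exit map is a bijection `Y → Z`, on vertices and on edges alike,
and it respects incidence because `σ` does. The one subtlety is the vertex `d ∈ U ∩ Z`: since
`ψ` and `θ` preserve the distance from the roots, orbits of vertices `y ≠ b` stay at distance
`dist(a, y) ≠ dist(a, b) = dist(c, d)` from `c` and never meet `d`, while the orbit of `b` exits
exactly at `d`.
-/

section ExitPoint

open Set

variable {α : Type*}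

/-- The first time the orbit of `x` under `σ` leaves `S`; it is `0` if the orbit never
leaves `S`. -/
def exitTime (σ : α → α) (S : Set α) (x : α) : ℕ := sInf {n | σ^[n] x ∉ S}

def exitPoint (σ : α → α) (S : Set α) (x : α) : α := σ^[exitTime σ S x] x

variable {σ : α → α} {S : Set α}

lemma iterate_mem_of_lt_exitTime {x : α} {j : ℕ} (hj : j < exitTime σ S x) : σ^[j] x ∈ S :=
  not_not.1 (Nat.notMem_of_lt_sInf hj)

lemma exitPoint_notMem {x : α} (h : ∃ n, σ^[n] x ∉ S) : exitPoint σ S x ∉ S :=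
  Nat.sInf_mem h

lemma exitPoint_eq {x : α} {n : ℕ} (hS : ∀ j < n, σ^[j] x ∈ S) (hn : σ^[n] x ∉ S) :
    exitPoint σ S x = σ^[n] x := by
  have : exitTime σ S x = n :=
    le_antisymm (Nat.sInf_le hn)
      (not_lt.1 fun h => Nat.sInf_mem (s := {n | σ^[n] x ∉ S}) ⟨n, hn⟩ (hS _ h))
  rw [exitPoint, this]

lemma iterate_mem_of_forall_lt {A : Set α} (hA : ∀ y ∈ S, y ∈ A → σ y ∈ A) {x : α}
    (hx : x ∈ A) {n : ℕ} (h : ∀ j < n, σ^[j] x ∈ S) : σ^[n] x ∈ A := by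
  induction n with
  | zero => exact hx
  | succ n ih =>
    rw [Function.iterate_succ_apply']
    exact hA _ (h n n.lt_succ_self) (ih fun j hj => h j (by omega))

lemma eq_of_iterate_eq_iterate (hσ : InjOn σ S) {x y : α} {n : ℕ}
    (hx : ∀ j < n, σ^[j] x ∈ S) (hy : ∀ j < n, σ^[j] y ∈ S) (h : σ^[n] x = σ^[n] y) :
    x = y := by
  induction n with
  | zero => exact h
  | succ n ih =>
    rw [Function.iterate_succ_apply', Function.iterate_succ_apply'] at h
    exact ih (fun j hj => hx j (by omega)) (fun j hj => hy j (by omega))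
      (hσ (hx n n.lt_succ_self) (hy n n.lt_succ_self) h)

lemma eq_of_iterate_eq_iterate_of_notMem_image (hσ : InjOn σ S) {x y : α}
    (hx : x ∉ σ '' S) (hy : y ∉ σ '' S) {m n : ℕ} (hxS : ∀ j < m, σ^[j] x ∈ S)
    (hyS : ∀ j < n, σ^[j] y ∈ S) (h : σ^[m] x = σ^[n] y) : x = y := by
  wlog hmn : m ≤ n generalizing x y m n
  · exact (this hy hx hyS hxS h.symm (by omega)).symm
  obtain ⟨k, rfl⟩ := Nat.exists_eq_add_of_le hmn
  rw [Function.iterate_add_apply] at h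
  have hxy : x = σ^[k] y := eq_of_iterate_eq_iterate hσ hxS
    (fun j hj => by rw [← Function.iterate_add_apply]; exact hyS _ (by omega)) h
  cases k with
  | zero => exact hxy
  | succ k =>
    rw [Function.iterate_succ_apply'] at hxy
    exact absurd ⟨_, hyS k (by omega), hxy.symm⟩ hx

lemma injOn_exitPoint (hσ : InjOn σ S) : InjOn (exitPoint σ S) (σ '' S)ᶜ :=
  fun _ hx _ hy h => eq_of_iterate_eq_iterate_of_notMem_image hσ hx hy
    (fun _ => iterate_mem_of_lt_exitTime) (fun _ => iterate_mem_of_lt_exitTime) h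

lemma exists_iterate_notMem (hS : S.Finite) (hσ : InjOn σ S) {x : α} (hx : x ∉ σ '' S) :
    ∃ n, σ^[n] x ∉ S := by
  by_contra! hall
  obtain ⟨i, j, hij, h⟩ : ∃ i j, i < j ∧ σ^[i] x = σ^[j] x := by
    obtain ⟨i, j, h, hne⟩ := Function.not_injective_iff.1 fun hinj =>
      hS.not_infinite (infinite_of_injective_forall_mem hinj hall)
    rcases hne.lt_or_gt with hlt | hlt
    · exact ⟨i, j, hlt, h⟩
    · exact ⟨j, i, hlt, h.symm⟩
  obtain ⟨k, rfl⟩ := Nat.exists_eq_add_of_lt hij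
  have hx' : x = σ^[k + 1] x := eq_of_iterate_eq_iterate hσ (n := i) (fun _ _ => hall _)
    (fun j _ => by rw [← Function.iterate_add_apply]; exact hall _)
    (by rwa [← Function.iterate_add_apply, ← Nat.add_assoc])
  rw [Function.iterate_succ_apply'] at hx'
  exact hx ⟨_, hall k, hx'.symm⟩

lemma apply_iterate_eq_map_iterate {β : Type*} {E : α → Sym2 β} {τ : β → β}
    (h : ∀ f ∈ S, E (σ f) = (E f).map τ) {x : α} {n : ℕ}
    (hx : ∀ j < n, σ^[j] x ∈ S) : E (σ^[n] x) = (E x).map τ^[n] := by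
  induction n with
  | zero => simp
  | succ n ih =>
    rw [Function.iterate_succ_apply', h _ (hx n n.lt_succ_self), ih fun j hj => hx j (by omega),
      Sym2.map_map, Function.iterate_succ']

theorem bijOn_exitPoint_comp {ψ θ : α → α} {Q R S W : Finset α} (hQR : Disjoint Q R)
    (hSW : Disjoint S W) (hψ : BijOn ψ (↑Q ∪ ↑R) (↑S ∪ ↑W)) (hθ : BijOn θ S Q) :
    BijOn (exitPoint (ψ ∘ θ) S ∘ ψ) R W := by
  classical
  have hσ : InjOn (ψ ∘ θ) S :=
    hψ.injOn.comp hθ.injOn (hθ.mapsTo.mono_right subset_union_left)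
  have hR : MapsTo ψ R ((ψ ∘ θ) '' S)ᶜ := by
    rintro r hr ⟨s, hs, hsr⟩
    have hq : θ s ∈ Q := hθ.mapsTo hs
    have := hψ.injOn (Or.inl hq) (Or.inr hr) hsr
    exact Finset.disjoint_left.1 hQR hq (this ▸ hr)
  have hmaps : MapsTo (exitPoint (ψ ∘ θ) S ∘ ψ) R W := by
    intro r hr
    have hmem : exitPoint (ψ ∘ θ) S (ψ r) ∈ (↑S ∪ ↑W : Set α) :=
      iterate_mem_of_forall_lt (fun y hy _ => hψ.mapsTo (Or.inl (hθ.mapsTo hy)))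
        (hψ.mapsTo (Or.inr hr)) fun _ => iterate_mem_of_lt_exitTime
    exact hmem.resolve_left (exitPoint_notMem (exists_iterate_notMem S.finite_toSet hσ (hR hr)))
  have hinj : InjOn (exitPoint (ψ ∘ θ) S ∘ ψ) R :=
    (injOn_exitPoint hσ).comp (hψ.injOn.mono subset_union_right) hR
  refine ⟨hmaps, hinj, Finset.surjOn_of_injOn_of_card_le _ hmaps hinj ?_⟩
  rw [← Finset.coe_union, ← Finset.coe_union] at hψ
  have hcard := Finset.card_nbij ψ hψ.mapsTo hψ.injOn hψ.surjOn
  rw [Finset.card_union_of_disjoint hQR, Finset.card_union_of_disjoint hSW,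
    Finset.card_nbij θ hθ.mapsTo hθ.injOn hθ.surjOn] at hcard
  omega

end ExitPoint

namespace MGraph

section Walk

variable {G H : MGraph} {u v w : ℕ} {n : ℕ}

lemma WalkLen.refl (G : MGraph) (u : ℕ) : G.WalkLen u u 0 :=
  ⟨fun _ => u, rfl, rfl, fun _ h => absurd h (Nat.not_lt_zero _)⟩

lemma WalkLen.cons (hadj : G.Adj u v) (h : G.WalkLen v w n) : G.WalkLen u w (n + 1) := by
  obtain ⟨f, h0, hn, hs⟩ := h
  refine ⟨fun i => if i = 0 then u else f (i - 1), rfl, by simpa using hn, ?_⟩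
  rintro (_ | i) hi
  · simpa [h0] using hadj
  · simpa using hs i (by omega)

lemma WalkLen.mono (hGH : ∀ x y, G.Adj x y → H.Adj x y) (h : G.WalkLen u v n) :
    H.WalkLen u v n :=
  let ⟨f, h0, hn, hs⟩ := h
  ⟨f, h0, hn, fun i hi => hGH _ _ (hs i hi)⟩

lemma WalkLen.le_add {p : ℕ → ℕ} (hp : ∀ x y, G.Adj x y → p x ≤ p y + 1)
    (h : G.WalkLen u v n) : p u ≤ p v + n := by
  obtain ⟨f, rfl, rfl, hs⟩ := h
  suffices ∀ k ≤ n, p (f 0) ≤ p (f k) + k from this n le_rfl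
  intro k hk
  induction k with
  | zero => simp
  | succ k ih => have := hp _ _ (hs k hk); have := ih (by omega); omega

lemma Reach.exists_walkLen (h : G.Reach u v) : ∃ n, G.WalkLen u v n := by
  induction h using Relation.ReflTransGen.head_induction_on with
  | refl => exact ⟨0, WalkLen.refl G v⟩
  | head hadj _ ih => obtain ⟨n, hn⟩ := ih; exact ⟨n + 1, hn.cons hadj⟩

lemma Adj.mem_verts (hG : G.WF) (h : G.Adj u v) : u ∈ G.verts ∧ v ∈ G.verts := by
  obtain ⟨e, he, hends⟩ := h
  exact ⟨hG e he u (hends ▸ Sym2.mem_mk_left u v), hG e he v (hends ▸ Sym2.mem_mk_right u v)⟩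

lemma IsTree.exists_walkLen (hG : G.IsTree) (hu : u ∈ G.verts) (hv : v ∈ G.verts) :
    ∃ n, G.WalkLen u v n :=
  (hG.2.1.2 u hu v hv).exists_walkLen

lemma edist_le (h : G.WalkLen u v n) : G.edist u v ≤ n := Nat.sInf_le h

lemma walkLen_edist (h : ∃ n, G.WalkLen u v n) : G.WalkLen u v (G.edist u v) := Nat.sInf_mem h

@[simp]
lemma edist_self (G : MGraph) (u : ℕ) : G.edist u u = 0 :=
  Nat.le_zero.1 (edist_le (WalkLen.refl G u))

lemma eq_of_edist_eq_zero (h : ∃ n, G.WalkLen u v n) (h0 : G.edist u v = 0) : u = v := by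
  obtain ⟨f, rfl, rfl, -⟩ := h0 ▸ walkLen_edist h
  rfl

lemma edist_le_edist_add_one (hadj : G.Adj u v) (h : ∃ n, G.WalkLen v w n) :
    G.edist u w ≤ G.edist v w + 1 :=
  edist_le ((walkLen_edist h).cons hadj)

end Walk

def retract (X : MGraph) (b v : ℕ) : ℕ := if v ∈ X.verts then v else b

lemma retract_of_mem {X : MGraph} {b v : ℕ} (hv : v ∈ X.verts) : retract X b v = v :=
  if_pos hv

namespace GluedAt

variable {D X Y : MGraph} {b u v w s t : ℕ}

lemma symm (h : GluedAt D X Y b) : GluedAt D Y X b := by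
  obtain ⟨hX, hY, hXY, hE, hV, hEd, hendsX, hendsY⟩ := h
  exact ⟨hY, hX, Finset.inter_comm X.verts _ ▸ hXY, hE.symm, Finset.union_comm X.verts _ ▸ hV,
    Finset.union_comm X.edges _ ▸ hEd, hendsY, hendsX⟩

lemma mem_left (h : GluedAt D X Y b) : b ∈ X.verts :=
  (Finset.mem_inter.1 (h.2.2.1 ▸ Finset.mem_singleton_self b)).1

lemma eq_of_mem (h : GluedAt D X Y b) (hX : v ∈ X.verts) (hY : v ∈ Y.verts) : v = b :=
  Finset.mem_singleton.1 (h.2.2.1 ▸ Finset.mem_inter.2 ⟨hX, hY⟩)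

lemma mem_verts_left (h : GluedAt D X Y b) (hv : v ∈ X.verts) : v ∈ D.verts :=
  h.2.2.2.2.1 ▸ Finset.mem_union_left _ hv

lemma mem_edges_left (h : GluedAt D X Y b) {e : ℕ} (he : e ∈ X.edges) : e ∈ D.edges :=
  h.2.2.2.2.2.1 ▸ Finset.mem_union_left _ he

lemma ends_left (h : GluedAt D X Y b) {e : ℕ} (he : e ∈ X.edges) : D.ends e = X.ends e :=
  h.2.2.2.2.2.2.1 e he

lemma disjoint_erase (h : GluedAt D X Y b) : Disjoint (X.verts.erase b) Y.verts :=
  Finset.disjoint_left.2 fun _ hv hY =>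
    Finset.ne_of_mem_erase hv (h.eq_of_mem (Finset.mem_of_mem_erase hv) hY)

lemma coe_verts (h : GluedAt D X Y b) :
    (D.verts : Set ℕ) = ↑(X.verts.erase b) ∪ ↑Y.verts := by
  have hb : b ∈ Y.verts := h.symm.mem_left
  ext v
  by_cases hv : v = b <;> simp [h.2.2.2.2.1, hv, hb]

lemma coe_edges (h : GluedAt D X Y b) : (D.edges : Set ℕ) = ↑X.edges ∪ ↑Y.edges := by
  rw [h.2.2.2.2.2.1, Finset.coe_union]

lemma wf (h : GluedAt D X Y b) : D.WF := by
  obtain ⟨hX, hY, -, -, hV, hEd, hendsX, hendsY⟩ := h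
  intro e he v hv
  rw [hV, Finset.mem_union]
  rcases Finset.mem_union.1 (hEd ▸ he) with he | he
  · exact Or.inl (hX.1 e he v (hendsX e he ▸ hv))
  · exact Or.inr (hY.1 e he v (hendsY e he ▸ hv))

lemma mem_verts_of_mem_ends (h : GluedAt D X Y b) {e : ℕ} (he : e ∈ X.edges)
    (hv : v ∈ D.ends e) : v ∈ X.verts :=
  h.1.1 e he v (h.2.2.2.2.2.2.1 e he ▸ hv)

lemma adj_left (h : GluedAt D X Y b) (hadj : X.Adj u v) : D.Adj u v := by
  obtain ⟨e, he, hends⟩ := hadj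
  exact ⟨e, h.2.2.2.2.2.1 ▸ Finset.mem_union_left _ he, h.2.2.2.2.2.2.1 e he ▸ hends⟩

lemma adj_cases (h : GluedAt D X Y b) (hadj : D.Adj u v) : X.Adj u v ∨ Y.Adj u v := by
  obtain ⟨e, he, hends⟩ := hadj
  rcases Finset.mem_union.1 (h.2.2.2.2.2.1 ▸ he) with he | he
  · exact Or.inl ⟨e, he, h.2.2.2.2.2.2.1 e he ▸ hends⟩
  · exact Or.inr ⟨e, he, h.2.2.2.2.2.2.2 e he ▸ hends⟩

lemma retract_right (h : GluedAt D X Y b) (hv : v ∈ X.verts) : retract Y b v = b := by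
  unfold retract
  split_ifs with hY
  exacts [h.eq_of_mem hv hY, rfl]

lemma exists_walkLen (h : GluedAt D X Y b) (hu : u ∈ X.verts) (hw : w ∈ Y.verts) :
    ∃ n, D.WalkLen u w n :=
  Reach.exists_walkLen <| Relation.ReflTransGen.trans
    (Relation.ReflTransGen.mono (fun _ _ => h.adj_left) _ _ (h.1.2.1.2 u hu b h.mem_left))
    (Relation.ReflTransGen.mono (fun _ _ => h.symm.adj_left) _ _
      (h.2.1.2.1.2 b h.symm.mem_left w hw))

lemma edist_retract_add_le_of_adj_left (h : GluedAt D X Y b) (hs : s ∈ X.verts) (hadj : X.Adj u v) :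
    X.edist (retract X b u) s + Y.edist (retract Y b u) t ≤
      X.edist (retract X b v) s + Y.edist (retract Y b v) t + 1 := by
  obtain ⟨hu, hv⟩ := hadj.mem_verts h.1.1
  rw [retract_of_mem hu, retract_of_mem hv, h.retract_right hu, h.retract_right hv]
  have := edist_le_edist_add_one hadj (h.1.exists_walkLen hv hs)
  omega

/-- A potential argument: an edge of `D` lies in `X` or in `Y` and changes only the corresponding
summand, by at most one. -/
lemma edist_retract_add_le (h : GluedAt D X Y b) (hs : s ∈ X.verts) (ht : t ∈ Y.verts)
    {n : ℕ} (hw : D.WalkLen u v n) :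
    X.edist (retract X b u) s + Y.edist (retract Y b u) t ≤
      X.edist (retract X b v) s + Y.edist (retract Y b v) t + n := by
  refine hw.le_add (p := fun v => X.edist (retract X b v) s + Y.edist (retract Y b v) t)
    fun x y hadj => ?_
  rcases h.adj_cases hadj with hadj | hadj
  · exact h.edist_retract_add_le_of_adj_left hs hadj
  · have := h.symm.edist_retract_add_le_of_adj_left (t := s) ht hadj
    omega

lemma edist_eq_left (h : GluedAt D X Y b) (hu : u ∈ X.verts) (hv : v ∈ X.verts) :
    D.edist u v = X.edist u v := by
  have hX := walkLen_edist (h.1.exists_walkLen hu hv)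
  have hD := walkLen_edist ⟨_, hX.mono fun _ _ => h.adj_left⟩
  refine le_antisymm (edist_le (hX.mono fun _ _ => h.adj_left)) ?_
  have := h.edist_retract_add_le hv h.symm.mem_left hD
  rw [retract_of_mem hu, retract_of_mem hv, h.retract_right hu, h.retract_right hv] at this
  simp only [edist_self] at this
  omega

lemma eq_of_edist_le (h : GluedAt D X Y b) {x : ℕ} (hx : x ∈ X.verts) (hw : w ∈ Y.verts)
    (hle : D.edist x w ≤ D.edist x b) : w = b := by
  have := h.edist_retract_add_le h.mem_left hw (walkLen_edist (h.exists_walkLen hx hw))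
  rw [retract_of_mem hx, retract_of_mem hw, h.retract_right hx, h.symm.retract_right hw] at this
  simp only [edist_self] at this
  rw [h.edist_eq_left hx h.mem_left] at hle
  exact (eq_of_edist_eq_zero (h.2.1.exists_walkLen h.symm.mem_left hw) (by omega)).symm

end GluedAt

namespace Iso

variable {G H : MGraph} {u v : ℕ}

def symm (φ : Iso G H) (hG : G.WF) : Iso H G where
  vmap := Function.invFunOn φ.vmap G.verts
  emap := Function.invFunOn φ.emap G.edges
  vmap_bij := φ.vmap_bij.symm φ.vmap_bij.invOn_invFunOn.symm
  emap_bij := φ.emap_bij.symm φ.emap_bij.invOn_invFunOn.symm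
  ends_eq f hf := by
    obtain ⟨e, he, rfl⟩ := φ.emap_bij.surjOn hf
    rw [φ.emap_bij.invOn_invFunOn.1 he, φ.ends_eq e he, Sym2.map_map]
    conv_lhs => rw [← id_eq (G.ends e), ← Sym2.map_id]
    exact Sym2.map_congr fun v hv => (φ.vmap_bij.invOn_invFunOn.1 (hG e he v hv)).symm

lemma symm_vmap_vmap (φ : Iso G H) (hG : G.WF) (hu : u ∈ G.verts) :
    (φ.symm hG).vmap (φ.vmap u) = u :=
  φ.vmap_bij.invOn_invFunOn.1 hu

lemma walkLen_map (φ : Iso G H) {n : ℕ} (h : G.WalkLen u v n) :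
    H.WalkLen (φ.vmap u) (φ.vmap v) n := by
  obtain ⟨f, rfl, rfl, hs⟩ := h
  refine ⟨φ.vmap ∘ f, rfl, rfl, fun i hi => ?_⟩
  obtain ⟨e, he, hends⟩ := hs i hi
  exact ⟨φ.emap e, φ.emap_bij.mapsTo he, by rw [φ.ends_eq e he, hends, Sym2.map_mk]; rfl⟩

lemma edist_map (φ : Iso G H) (hG : G.WF) (hu : u ∈ G.verts) (hv : v ∈ G.verts) :
    H.edist (φ.vmap u) (φ.vmap v) = G.edist u v := by
  refine congrArg sInf (Set.ext fun n => ⟨fun h => ?_, φ.walkLen_map⟩)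
  have := (φ.symm hG).walkLen_map h
  rwa [symm_vmap_vmap φ hG hu, symm_vmap_vmap φ hG hv] at this

end Iso

section Cancel

variable {T Y U Z D₁ D₂ : MGraph} {a b c d u : ℕ}

/-- Removing `d` makes `ψ b` a valid starting point: it lies outside `(ψ ∘ θ) '' (U \ {d})`. -/
def cancelVmap (ψ : Iso D₁ D₂) (θ : Iso U T) (d : ℕ) : ℕ → ℕ :=
  exitPoint (ψ.vmap ∘ θ.vmap) ↑(U.verts.erase d) ∘ ψ.vmap

def cancelEmap (ψ : Iso D₁ D₂) (θ : Iso U T) : ℕ → ℕ :=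
  exitPoint (ψ.emap ∘ θ.emap) ↑U.edges ∘ ψ.emap

lemma bijOn_cancelVmap (h₁ : GluedAt D₁ T Y b) (h₂ : GluedAt D₂ U Z d) (ψ : Iso D₁ D₂)
    (θ : Iso U T) (hθd : θ.vmap d = b) : Set.BijOn (cancelVmap ψ θ d) Y.verts Z.verts := by
  refine bijOn_exitPoint_comp h₁.disjoint_erase h₂.disjoint_erase
    (h₁.coe_verts ▸ h₂.coe_verts ▸ ψ.vmap_bij) ?_
  rw [Finset.coe_erase, Finset.coe_erase, ← hθd]
  exact θ.vmap_bij.sdiff_singleton h₂.mem_left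

lemma bijOn_cancelEmap (h₁ : GluedAt D₁ T Y b) (h₂ : GluedAt D₂ U Z d) (ψ : Iso D₁ D₂)
    (θ : Iso U T) : Set.BijOn (cancelEmap ψ θ) Y.edges Z.edges :=
  bijOn_exitPoint_comp h₁.2.2.2.1 h₂.2.2.2.1 (h₁.coe_edges ▸ h₂.coe_edges ▸ ψ.emap_bij)
    θ.emap_bij

lemma edist_vmap (h₁ : GluedAt D₁ T Y b) (ha : a ∈ T.verts) (ψ : Iso D₁ D₂)
    (hψ : ψ.vmap a = c) (hu : u ∈ D₁.verts) : D₂.edist c (ψ.vmap u) = D₁.edist a u :=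
  hψ ▸ ψ.edist_map h₁.wf (h₁.mem_verts_left ha) hu

lemma edist_vmap_comp (h₁ : GluedAt D₁ T Y b) (h₂ : GluedAt D₂ U Z d) (ha : a ∈ T.verts)
    (hc : c ∈ U.verts) (ψ : Iso D₁ D₂) (hψ : ψ.vmap a = c) (θ : Iso U T) (hθc : θ.vmap c = a)
    {x : ℕ} (hx : x ∈ U.verts) : D₂.edist c (ψ.vmap (θ.vmap x)) = D₂.edist c x := by
  have hTx : θ.vmap x ∈ T.verts := θ.vmap_bij.mapsTo hx
  calc D₂.edist c (ψ.vmap (θ.vmap x))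
      = T.edist a (θ.vmap x) := by
        rw [edist_vmap h₁ ha ψ hψ (h₁.mem_verts_left hTx), h₁.edist_eq_left ha hTx]
    _ = D₂.edist c x := by
        rw [← hθc, θ.edist_map h₂.1.1 hc hx, h₂.edist_eq_left hc hx]

lemma edist_iterate_vmap_comp (h₁ : GluedAt D₁ T Y b) (h₂ : GluedAt D₂ U Z d)
    (ha : a ∈ T.verts) (hc : c ∈ U.verts) (ψ : Iso D₁ D₂) (hψ : ψ.vmap a = c) (θ : Iso U T)
    (hθc : θ.vmap c = a) (hu : u ∈ D₁.verts) {n : ℕ}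
    (hn : ∀ j < n, (ψ.vmap ∘ θ.vmap)^[j] (ψ.vmap u) ∈ U.verts) :
    D₂.edist c ((ψ.vmap ∘ θ.vmap)^[n] (ψ.vmap u)) = D₁.edist a u :=
  iterate_mem_of_forall_lt (A := {z | D₂.edist c z = D₁.edist a u})
    (fun _ hy hyA => (edist_vmap_comp h₁ h₂ ha hc ψ hψ θ hθc hy).trans hyA)
    (edist_vmap h₁ ha ψ hψ hu) hn

lemma edist_gluing (h₁ : GluedAt D₁ T Y b) (h₂ : GluedAt D₂ U Z d) (ha : a ∈ T.verts)
    (hc : c ∈ U.verts) (ψ : Iso D₁ D₂) (hψ : ψ.vmap a = c) (θ : Iso U T) (hθc : θ.vmap c = a)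
    (hθd : θ.vmap d = b) : D₂.edist c d = D₁.edist a b := by
  rw [← edist_vmap_comp h₁ h₂ ha hc ψ hψ θ hθc h₂.mem_left, hθd,
    edist_vmap h₁ ha ψ hψ (h₁.mem_verts_left h₁.mem_left)]

lemma eq_of_mem_of_edist_eq (h₁ : GluedAt D₁ T Y b) (h₂ : GluedAt D₂ U Z d) (ha : a ∈ T.verts)
    (hc : c ∈ U.verts) (ψ : Iso D₁ D₂) (hψ : ψ.vmap a = c) (θ : Iso U T) (hθc : θ.vmap c = a)
    (hθd : θ.vmap d = b) {z : ℕ} (hz : z ∈ Z.verts) (hzb : D₂.edist c z = D₁.edist a b) :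
    z = d :=
  h₂.eq_of_edist_le hc hz (by rw [hzb, edist_gluing h₁ h₂ ha hc ψ hψ θ hθc hθd])

lemma cancelVmap_gluing (h₁ : GluedAt D₁ T Y b) (h₂ : GluedAt D₂ U Z d) (ha : a ∈ T.verts)
    (hc : c ∈ U.verts) (ψ : Iso D₁ D₂) (hψ : ψ.vmap a = c) (θ : Iso U T) (hθc : θ.vmap c = a)
    (hθd : θ.vmap d = b) : cancelVmap ψ θ d b = d :=
  eq_of_mem_of_edist_eq h₁ h₂ ha hc ψ hψ θ hθc hθd
    ((bijOn_cancelVmap h₁ h₂ ψ θ hθd).mapsTo h₁.symm.mem_left)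
    (edist_iterate_vmap_comp h₁ h₂ ha hc ψ hψ θ hθc (h₁.mem_verts_left h₁.mem_left)
      fun _ hj => Finset.mem_of_mem_erase (iterate_mem_of_lt_exitTime hj))

/-- Away from the gluing vertex the orbit stays at distance `≠ dist(c, d)` from `c`, so it never
meets `d`. -/
lemma iterate_eq_cancelVmap (h₁ : GluedAt D₁ T Y b) (h₂ : GluedAt D₂ U Z d) (ha : a ∈ T.verts)
    (hc : c ∈ U.verts) (ψ : Iso D₁ D₂) (hψ : ψ.vmap a = c) (θ : Iso U T) (hθc : θ.vmap c = a)
    (hθd : θ.vmap d = b) (hu : u ∈ Y.verts) {n : ℕ}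
    (hn : ∀ j < n, (ψ.vmap ∘ θ.vmap)^[j] (ψ.vmap u) ∈ U.verts)
    (hZ : (ψ.vmap ∘ θ.vmap)^[n] (ψ.vmap u) ∈ Z.verts) :
    (ψ.vmap ∘ θ.vmap)^[n] (ψ.vmap u) = cancelVmap ψ θ d u := by
  have hedist : ∀ j ≤ n, D₂.edist c ((ψ.vmap ∘ θ.vmap)^[j] (ψ.vmap u)) = D₁.edist a u :=
    fun j hj => edist_iterate_vmap_comp h₁ h₂ ha hc ψ hψ θ hθc (h₁.symm.mem_verts_left hu)
      fun i hi => hn i (by omega)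
  by_cases hub : u = b
  · subst hub
    rw [cancelVmap_gluing h₁ h₂ ha hc ψ hψ θ hθc hθd]
    exact eq_of_mem_of_edist_eq h₁ h₂ ha hc ψ hψ θ hθc hθd hZ (hedist n le_rfl)
  have hne : ∀ j ≤ n, (ψ.vmap ∘ θ.vmap)^[j] (ψ.vmap u) ≠ d := fun j hj hd =>
    hub (h₁.eq_of_edist_le ha hu (by
      rw [← hedist j hj, hd, edist_gluing h₁ h₂ ha hc ψ hψ θ hθc hθd]))
  exact (exitPoint_eq (fun j hj => Finset.mem_erase.2 ⟨hne j hj.le, hn j hj⟩)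
    fun hmem => hne n le_rfl (h₂.eq_of_mem (Finset.mem_of_mem_erase hmem) hZ)).symm

lemma ends_emap_comp (h₁ : GluedAt D₁ T Y b) (h₂ : GluedAt D₂ U Z d) (ψ : Iso D₁ D₂)
    (θ : Iso U T) {f : ℕ} (hf : f ∈ U.edges) :
    D₂.ends (ψ.emap (θ.emap f)) = (D₂.ends f).map (ψ.vmap ∘ θ.vmap) := by
  have hTf : θ.emap f ∈ T.edges := θ.emap_bij.mapsTo hf
  rw [ψ.ends_eq _ (h₁.mem_edges_left hTf), h₁.ends_left hTf, θ.ends_eq f hf, h₂.ends_left hf,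
    Sym2.map_map]

lemma ends_cancelEmap (h₁ : GluedAt D₁ T Y b) (h₂ : GluedAt D₂ U Z d) (ha : a ∈ T.verts)
    (hc : c ∈ U.verts) (ψ : Iso D₁ D₂) (hψ : ψ.vmap a = c) (θ : Iso U T) (hθc : θ.vmap c = a)
    (hθd : θ.vmap d = b) {e : ℕ} (he : e ∈ Y.edges) :
    Z.ends (cancelEmap ψ θ e) = (Y.ends e).map (cancelVmap ψ θ d) := by
  set n := exitTime (ψ.emap ∘ θ.emap) U.edges (ψ.emap e)
  have hn : ∀ j < n, (ψ.emap ∘ θ.emap)^[j] (ψ.emap e) ∈ U.edges :=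
    fun _ => iterate_mem_of_lt_exitTime
  have hends : ∀ j ≤ n, D₂.ends ((ψ.emap ∘ θ.emap)^[j] (ψ.emap e)) =
      (Y.ends e).map ((ψ.vmap ∘ θ.vmap)^[j] ∘ ψ.vmap) := fun j hj => by
    rw [apply_iterate_eq_map_iterate (E := D₂.ends) (σ := ψ.emap ∘ θ.emap) (τ := ψ.vmap ∘ θ.vmap)
        (fun _ hf => ends_emap_comp h₁ h₂ ψ θ hf) fun i hi => hn i (by omega),
      ψ.ends_eq e (h₁.symm.mem_edges_left he), h₁.symm.ends_left he, Sym2.map_map]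
  have hmem : ∀ j ≤ n, ∀ u ∈ Y.ends e,
      (ψ.vmap ∘ θ.vmap)^[j] (ψ.vmap u) ∈ D₂.ends ((ψ.emap ∘ θ.emap)^[j] (ψ.emap e)) :=
    fun j hj u hu => hends j hj ▸ Sym2.mem_map.2 ⟨u, hu, rfl⟩
  have hZ : cancelEmap ψ θ e ∈ Z.edges := (bijOn_cancelEmap h₁ h₂ ψ θ).mapsTo he
  rw [← h₂.symm.ends_left hZ]
  refine (hends n le_rfl).trans (Sym2.map_congr fun u hu => ?_)
  exact iterate_eq_cancelVmap h₁ h₂ ha hc ψ hψ θ hθc hθd (h₁.2.1.1 e he u hu)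
    (fun j hj => h₂.mem_verts_of_mem_ends (hn j hj) (hmem j hj.le u hu))
    (h₂.symm.mem_verts_of_mem_ends hZ (hmem n le_rfl u hu))

theorem GluedAt.exists_iso_right (h₁ : GluedAt D₁ T Y b) (h₂ : GluedAt D₂ U Z d)
    (ha : a ∈ T.verts) (hc : c ∈ U.verts) (ψ : Iso D₁ D₂) (hψ : ψ.vmap a = c) (θ : Iso U T)
    (hθc : θ.vmap c = a) (hθd : θ.vmap d = b) : ∃ χ : Iso Y Z, χ.vmap b = d :=
  ⟨⟨cancelVmap ψ θ d, cancelEmap ψ θ, bijOn_cancelVmap h₁ h₂ ψ θ hθd, bijOn_cancelEmap h₁ h₂ ψ θ,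
    fun _ he => ends_cancelEmap h₁ h₂ ha hc ψ hψ θ hθc hθd he⟩,
    cancelVmap_gluing h₁ h₂ ha hc ψ hψ θ hθc hθd⟩

end Cancel

end MGraph

open MGraph in
/-- Let `T`, `Y` be trees with `T ∩ Y = {b}`, `D₁ = T ∪ Y`; let `U`, `Z` be
trees with `U ∩ Z = {d}`, `D₂ = U ∪ Z`; let `a ∈ T`, `c ∈ U`.  If
`ψ : D₁(a) → D₂(c)` and `θ : T(a) → U(c)` are isomorphisms of rooted trees and
`θ(b) = d`, then `Y(b) ≅ Z(d)` as rooted trees. -/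
theorem rooted_iso_of_glued_iso (T Y U Z D₁ D₂ : MGraph) (a b c d : ℕ)
    (h₁ : GluedAt D₁ T Y b) (h₂ : GluedAt D₂ U Z d)
    (ha : a ∈ T.verts) (hc : c ∈ U.verts)
    (ψ : Iso D₁ D₂) (hψ : ψ.vmap a = c)
    (θ : Iso T U) (hθa : θ.vmap a = c) (hθb : θ.vmap b = d) :
    ∃ χ : Iso Y Z, χ.vmap b = d :=
  h₁.exists_iso_right h₂ ha hc ψ hψ (θ.symm h₁.1.1)
    (hθa ▸ θ.symm_vmap_vmap h₁.1.1 ha) (hθb ▸ θ.symm_vmap_vmap h₁.1.1 h₁.mem_left)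
end
end
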